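/- arXiv:2402.14965 — 2 statements merged into one kernel-verified Lean document; each statement's English description precedes it below -/
import Mathlib

section
/- No tree-shaped polyomino of bounding size 2×n with n ≤ 3 folds onto the surface C of the unit cube. -/
/-!
Common formal framework: polyominoes (as square complexes with possible slits),
their topological realisations, folded states, ambient isotopy, foldings onto the
surface of the unit cube, unlinks, and consistent mappings.
-/

open Classical
noncomputable section

namespace CubeFold

/-- Euclidean plane. -/
abbrev R2 := EuclideanSpace ℝ (Fin 2)
/-- Euclidean 3-space. -/
abbrev R3 := EuclideanSpace ℝ (Fin 3)

/-- A cell (unit square) of the integer lattice, indexed by its lower-left corner. -/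
abbrev Cell := ℤ × ℤ

/-- Two cells are adjacent if they share an edge of the lattice. -/
def cellAdj (c d : Cell) : Prop := (c.1 - d.1).natAbs + (c.2 - d.2).natAbs = 1

instance (c d : Cell) : Decidable (cellAdj c d) :=
  inferInstanceAs (Decidable ((c.1 - d.1).natAbs + (c.2 - d.2).natAbs = 1))

/-- A polyomino: a finite nonempty set of lattice cells, together with a symmetric set of
`joins` (pairs of adjacent cells glued along their common edge; adjacent cells that are not
joined are separated by a slit), such that the whole figure is edge-connected.
Since the cells sit at given positions of the plane, such a polyomino automatically admits a
flat placement in which distinct faces overlap only in edges. -/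
structure Polyomino where
  cells : Finset Cell
  nonempty : cells.Nonempty
  joins : Finset (Cell × Cell)
  joins_symm : ∀ e ∈ joins, (e.2, e.1) ∈ joins
  joins_mem : ∀ e ∈ joins, e.1 ∈ cells ∧ e.2 ∈ cells
  joins_adj : ∀ e ∈ joins, cellAdj e.1 e.2
  connected : ∀ c ∈ cells, ∀ d ∈ cells,
    Relation.ReflTransGen (fun a b => (a, b) ∈ joins) c d

/-- The closed unit square in the plane. -/
def unitSq : Set R2 := {x | 0 ≤ x 0 ∧ x 0 ≤ 1 ∧ 0 ≤ x 1 ∧ x 1 ≤ 1}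

def mk2 (a b : ℝ) : R2 := WithLp.toLp 2 ![a, b]

/-- The point of the plane corresponding to local coordinates `x` inside cell `c`. -/
def cellPt (c : Cell) (x : R2) : R2 := mk2 ((c.1 : ℝ) + x 0) ((c.2 : ℝ) + x 1)

/-- Index space: disjoint union of the (closed) unit squares of the cells of `P`. -/
def PolyIdx (P : Polyomino) : Type := {c : Cell // c ∈ P.cells} × {x : R2 // x ∈ unitSq}

instance (P : Polyomino) : TopologicalSpace (PolyIdx P) := by
  unfold PolyIdx; infer_instance

/-- Gluing relation: two points of (possibly different) cells are identified when they occupy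
the same point of the plane and their cells are equal or joined. -/
def glueRel (P : Polyomino) : PolyIdx P → PolyIdx P → Prop := fun a b =>
  cellPt a.1.1 a.2.1 = cellPt b.1.1 b.2.1 ∧ (a.1.1 = b.1.1 ∨ (a.1.1, b.1.1) ∈ P.joins)

/-- The underlying topological space of the polyomino `P` (a square complex). -/
def PolySpace (P : Polyomino) : Type := Quot (glueRel P)

instance (P : Polyomino) : TopologicalSpace (PolySpace P) := by
  unfold PolySpace; infer_instance

/-- The point of `PolySpace P` lying in cell `c` with local coordinates `x`. -/
def pt (P : Polyomino) (c : Cell) (hc : c ∈ P.cells) (x : R2) (hx : x ∈ unitSq) :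
    PolySpace P :=
  Quot.mk (glueRel P) (⟨c, hc⟩, ⟨x, hx⟩)

/-- The canonical flat placement of `P` in the plane. -/
def flatMap (P : Polyomino) : PolySpace P → R2 :=
  Quot.lift (fun a => cellPt a.1.1 a.2.1) (fun _ _ h => h.1)

/-- A map `PolySpace P → R3` is piecewise linear if each cell can be covered by finitely
many convex pieces on each of which the map is affine. -/
def IsPLMap (P : Polyomino) (F : PolySpace P → R3) : Prop :=
  ∀ (c : Cell) (hc : c ∈ P.cells), ∃ S : Finset (Finset R2),
    (∀ x ∈ unitSq, ∃ T ∈ S, x ∈ convexHull ℝ (T : Set R2)) ∧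
    ∀ T ∈ S, ∃ g : R2 →ᵃ[ℝ] R3, ∀ x, ∀ hx : x ∈ unitSq,
      x ∈ convexHull ℝ (T : Set R2) → F (pt P c hc x hx) = g x

/-- A folded state of `P`: a piecewise linear topological embedding of `P` into `R3`. -/
structure FoldedState (P : Polyomino) where
  toFun : PolySpace P → R3
  embedding : Topology.IsEmbedding toFun
  pl : IsPLMap P toFun

/-- A folding blueprint: a map whose restriction to each face of `P` is an isometry. -/
def IsBlueprint (P : Polyomino) (β : PolySpace P → R3) : Prop :=
  ∀ (c : Cell) (hc : c ∈ P.cells), ∀ (x y : R2) (hx : x ∈ unitSq) (hy : y ∈ unitSq),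
    dist (β (pt P c hc x hx)) (β (pt P c hc y hy)) = dist x y

/-- A folded state `F` (ε-)corresponds to a blueprint `β` (with the fixed ε = 1/2). -/
def Corresponds (P : Polyomino) (F : FoldedState P) (β : PolySpace P → R3) : Prop :=
  ∀ p : PolySpace P, dist (F.toFun p) (β p) < 1 / 2

/-- A flat folding blueprint: an isometric placement of the flat polyomino inside a plane
of `R3`. -/
def IsFlatBlueprint (P : Polyomino) (β : PolySpace P → R3) : Prop :=
  ∃ j : R2 → R3, Isometry j ∧ β = j ∘ flatMap P

/-- A trivial folding: a realisation of a flat folding blueprint. -/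
def IsTrivialFolding (P : Polyomino) (F : FoldedState P) : Prop :=
  ∃ β : PolySpace P → R3, IsFlatBlueprint P β ∧ Corresponds P F β

/-- An ambient isotopy of `R3`: a continuous family of self-homeomorphisms starting at the
identity. -/
def IsAmbientIsotopy (H : ℝ → R3 → R3) : Prop :=
  Continuous (fun q : ℝ × R3 => H q.1 q.2) ∧
  (∀ t : ℝ, ∃ h : R3 ≃ₜ R3, ∀ x, H t x = h x) ∧
  (∀ x, H 0 x = x)

/-- A folded state is valid (is a folding) if it is ambient isotopic to a trivial folding. -/
def ValidFolding (P : Polyomino) (F : FoldedState P) : Prop :=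
  ∃ H : ℝ → R3 → R3, IsAmbientIsotopy H ∧
    ∃ G : FoldedState P, IsTrivialFolding P G ∧ ∀ p, H 1 (F.toFun p) = G.toFun p

/-- The surface of the unit cube in `R3`. -/
def cubeSurface : Set R3 :=
  {p | (∀ i, 0 ≤ p i ∧ p i ≤ 1) ∧ ∃ i, p i = 0 ∨ p i = 1}

/-- The face of the unit cube with normal direction `i` at height `0` or `1`. -/
def cubeFace (i : Fin 3) (b : Bool) : Set R3 :=
  {p | (∀ j, 0 ≤ p j ∧ p j ≤ 1) ∧ p i = if b then 1 else 0}

/-- `P` folds onto the surface of the unit cube: some valid folding of `P` corresponds to a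
surjective folding blueprint `β : P → C`. -/
def FoldsOntoCube (P : Polyomino) : Prop :=
  ∃ F : FoldedState P, ValidFolding P F ∧
    ∃ β : PolySpace P → R3, IsBlueprint P β ∧ Set.range β = cubeSurface ∧
      Corresponds P F β

/-- `n` disjoint round circles, side by side in a plane. -/
def stdCircles (n : ℕ) : Set R3 :=
  {p | ∃ k : ℕ, k < n ∧ (p 0 - 3 * (k : ℝ)) ^ 2 + (p 1) ^ 2 = 1 ∧ p 2 = 0}

/-- A subset of `R3` is an unlink if some ambient isotopy carries it to a finite collection
of circles embedded side by side in a plane. -/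
def IsUnlink (L : Set R3) : Prop :=
  ∃ (n : ℕ) (H : ℝ → R3 → R3), IsAmbientIsotopy H ∧ (fun x => H 1 x) '' L = stdCircles n

/-- The (topological) boundary of the polyomino surface: the set of points having no open
neighbourhood homeomorphic to the plane. -/
def polyBoundary (P : Polyomino) : Set (PolySpace P) :=
  {p | ¬ ∃ U : Set (PolySpace P), IsOpen U ∧ p ∈ U ∧ Nonempty (U ≃ₜ R2)}

/-- A polyhedron in `R3`: a finite union of convex polytopes. -/
def IsPolyhedron (Q : Set R3) : Prop :=
  ∃ S : Finset (Finset R3), Q = ⋃ T ∈ S, convexHull ℝ (T : Set R3)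

/-- A polyhedral sphere: a polyhedron homeomorphic to the 2-sphere. -/
def IsPolyhedralSphere (Q : Set R3) : Prop :=
  IsPolyhedron Q ∧ Nonempty (Q ≃ₜ Metric.sphere (0 : R3) 1)

/-! ### Consistent mappings to the combinatorial cube -/

/-- The corner of cell `c` with local coordinates `k`. -/
def cornerPt (c : Cell) (k : Fin 2 × Fin 2) : ℤ × ℤ :=
  (c.1 + ((k.1 : ℕ) : ℤ), c.2 + ((k.2 : ℕ) : ℤ))

/-- Number of coordinates in which two vertices of the cube differ. -/
def vdiff (u v : Fin 3 → Bool) : ℕ := (Finset.univ.filter fun i => u i ≠ v i).card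

/-- Number of coordinates in which two corners of a square differ. -/
def kdiff (k k' : Fin 2 × Fin 2) : ℕ :=
  (if k.1 = k'.1 then 0 else 1) + (if k.2 = k'.2 then 0 else 1)

/-- A consistent mapping from the polyomino `P` to the unit cube, viewed as a homomorphism of
square complexes: cells are mapped to faces (`Fin 3 × Bool`: a normal direction together with a
side) and corners of cells to vertices of the cube (`Fin 3 → Bool`), so that each cell is mapped
isomorphically onto a face and identified corners of joined cells have equal images (hence edges
are mapped to edges and all incidences are preserved). -/
structure ConsMap (P : Polyomino) where
  cellMap : Cell → Fin 3 × Bool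
  vertMap : Cell → Fin 2 × Fin 2 → (Fin 3 → Bool)
  vert_on_face : ∀ c ∈ P.cells, ∀ k, vertMap c k (cellMap c).1 = (cellMap c).2
  face_iso : ∀ c ∈ P.cells, ∀ k k', vdiff (vertMap c k) (vertMap c k') = kdiff k k'
  join_compat : ∀ e ∈ P.joins, ∀ k k', cornerPt e.1 k = cornerPt e.2 k' →
    vertMap e.1 k = vertMap e.2 k'

/-- A consistent mapping is surjective if every face of the cube is the image of a cell. -/
def ConsMap.Surjective {P : Polyomino} (φ : ConsMap P) : Prop :=
  ∀ f : Fin 3 × Bool, ∃ c ∈ P.cells, φ.cellMap c = f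

/-! ### Rectangular polyominoes, holes and slits -/

/-- The cells of the full `m × n` rectangle (`m` columns, `n` rows). -/
def rectCells (m n : ℕ) : Finset Cell := Finset.Icc (0, 0) ((m : ℤ) - 1, (n : ℤ) - 1)

/-- All joins between adjacent cells of `S`. -/
def fullJoins (S : Finset Cell) : Finset (Cell × Cell) :=
  (S ×ˢ S).filter fun e => cellAdj e.1 e.2

/-- The two cells separated by the vertical lattice edge from `(p,q)` to `(p,q+1)`. -/
def vE (p q : ℤ) : Cell × Cell := ((p - 1, q), (p, q))

/-- The two cells separated by the horizontal lattice edge from `(p,q)` to `(p+1,q)`. -/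
def hE (p q : ℤ) : Cell × Cell := ((p, q - 1), (p, q))

/-- Both orientations of a join. -/
def remPair (e : Cell × Cell) : Finset (Cell × Cell) := {e, (e.2, e.1)}

/-- A lattice vertex interior to the `m × n` rectangle. -/
def intVert (m n : ℕ) (v : ℤ × ℤ) : Prop :=
  1 ≤ v.1 ∧ v.1 ≤ (m : ℤ) - 1 ∧ 1 ≤ v.2 ∧ v.2 ≤ (n : ℤ) - 1

/-- The four sides of the cell `c`, as pairs of separated cells:
left, right, bottom, top. -/
def cellSide (c : Cell) : Fin 4 → Cell × Cell :=
  ![vE c.1 c.2, vE (c.1 + 1) c.2, hE c.1 c.2, hE c.1 (c.2 + 1)]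

/-- `P` is the full `m × n` rectangle with exactly the joins of `R` slit open. -/
def RectWithSlits (P : Polyomino) (m n : ℕ) (R : Finset (Cell × Cell)) : Prop :=
  P.cells = rectCells m n ∧ P.joins = fullJoins (rectCells m n) \ R

/-- `P` is an `m × n` rectangle with a single unit square hole `h` (and no other holes). -/
def RectWithUnitHole (P : Polyomino) (m n : ℕ) (h : Cell) : Prop :=
  1 ≤ h.1 ∧ h.1 ≤ (m : ℤ) - 2 ∧ 1 ≤ h.2 ∧ h.2 ≤ (n : ℤ) - 2 ∧
  P.cells = (rectCells m n).erase h ∧ P.joins = fullJoins P.cells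

/-- `P` is an `m × n` rectangle with a single slit of size 1 (and no other holes). -/
def RectWithSlit1 (P : Polyomino) (m n : ℕ) : Prop :=
  ∃ p q : ℤ,
    (intVert m n (p, q) ∧ intVert m n (p, q + 1) ∧ RectWithSlits P m n (remPair (vE p q))) ∨
    (intVert m n (p, q) ∧ intVert m n (p + 1, q) ∧ RectWithSlits P m n (remPair (hE p q)))

/-- `P` is an `m × n` rectangle with a single I-slit of size 2 (and no other holes). -/
def RectWithISlit2 (P : Polyomino) (m n : ℕ) : Prop :=
  ∃ p q : ℤ,
    (intVert m n (p, q) ∧ intVert m n (p, q + 1) ∧ intVert m n (p, q + 2) ∧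
      RectWithSlits P m n (remPair (vE p q) ∪ remPair (vE p (q + 1)))) ∨
    (intVert m n (p, q) ∧ intVert m n (p + 1, q) ∧ intVert m n (p + 2, q) ∧
      RectWithSlits P m n (remPair (hE p q) ∪ remPair (hE (p + 1) q)))

/-- `P` is an `m × n` rectangle with a single L-slit of size 2 (and no other holes):
two perpendicular slit edges meeting at the interior vertex `(p,q)`. -/
def RectWithLSlit2 (P : Polyomino) (m n : ℕ) : Prop :=
  ∃ p q : ℤ, ∃ s t : Bool,
    intVert m n (p, q) ∧
    intVert m n (p, q + (if s then 1 else -1)) ∧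
    intVert m n (p + (if t then 1 else -1), q) ∧
    RectWithSlits P m n
      (remPair (vE p (if s then q else q - 1)) ∪ remPair (hE (if t then p else p - 1) q))

/-- `P` is an `m × n` rectangle with a single U-slit of size 3 (and no other holes):
three of the four sides of the cell `c` are slit open. -/
def RectWithUSlit3 (P : Polyomino) (m n : ℕ) : Prop :=
  ∃ c : Cell, ∃ k : Fin 4,
    intVert m n (c.1, c.2) ∧ intVert m n (c.1 + 1, c.2) ∧
    intVert m n (c.1, c.2 + 1) ∧ intVert m n (c.1 + 1, c.2 + 1) ∧
    RectWithSlits P m n ((Finset.univ.erase k).biUnion fun k' => remPair (cellSide c k'))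

/-- `P` is an `m × n` rectangle whose holes are exactly the unit square holes `H`
(all interior, pairwise non-touching) and no other holes. -/
def RectWithUnitHoles (P : Polyomino) (m n : ℕ) (H : Finset Cell) : Prop :=
  (∀ h ∈ H, 1 ≤ h.1 ∧ h.1 ≤ (m : ℤ) - 2 ∧ 1 ≤ h.2 ∧ h.2 ≤ (n : ℤ) - 2) ∧
  (∀ h ∈ H, ∀ h' ∈ H, h ≠ h' → 2 ≤ max (h.1 - h'.1).natAbs (h.2 - h'.2).natAbs) ∧
  P.cells = rectCells m n \ H ∧ P.joins = fullJoins P.cells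

/-- Two unit square holes cooperate: they lie in the same or adjacent rows (resp. columns) and
the number of columns (resp. rows) strictly between them is odd. -/
def Cooperate (h₁ h₂ : Cell) : Prop :=
  ((h₁.2 - h₂.2).natAbs ≤ 1 ∧ Odd ((h₁.1 - h₂.1).natAbs - 1)) ∨
  ((h₁.1 - h₂.1).natAbs ≤ 1 ∧ Odd ((h₁.2 - h₂.2).natAbs - 1))

/-- The images under a consistent mapping of the four boundary edges of a unit square hole `h`
(each edge given as the unordered pair of the images of its two endpoints):
the facing sides of the right, left, top and bottom neighbouring cell of `h`. -/
def holeSideEdge {P : Polyomino} (φ : ConsMap P) (h : Cell) : Fin 4 → Set (Fin 3 → Bool) :=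
  ![{φ.vertMap (h.1 + 1, h.2) (0, 0), φ.vertMap (h.1 + 1, h.2) (0, 1)},
    {φ.vertMap (h.1 - 1, h.2) (1, 0), φ.vertMap (h.1 - 1, h.2) (1, 1)},
    {φ.vertMap (h.1, h.2 + 1) (0, 0), φ.vertMap (h.1, h.2 + 1) (1, 0)},
    {φ.vertMap (h.1, h.2 - 1) (0, 1), φ.vertMap (h.1, h.2 - 1) (1, 1)}]

/-- A consistent mapping is good if for no unit square hole of `H` all four boundary edges of
the hole are mapped to a single edge of the cube. -/
def ConsMap.IsGood {P : Polyomino} (φ : ConsMap P) (H : Finset Cell) : Prop :=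
  ∀ h ∈ H, ¬ ∀ k k' : Fin 4, holeSideEdge φ h k = holeSideEdge φ h k'

/-! ### Tree-shaped polyominoes and bounding boxes -/

/-- A polyomino is tree-shaped if its dual graph is a tree; since it is connected by
definition, this amounts to having exactly `#cells - 1` (unordered) joins. -/
def TreeShaped (P : Polyomino) : Prop := P.joins.card = 2 * (P.cells.card - 1)

/-- `P` has bounding box with lower-left cell `(x0, y0)`, `w` columns and `h` rows. -/
def HasBoundingBox (P : Polyomino) (x0 y0 : ℤ) (w h : ℕ) : Prop :=
  (∀ c ∈ P.cells, x0 ≤ c.1 ∧ c.1 < x0 + w ∧ y0 ≤ c.2 ∧ c.2 < y0 + h) ∧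
  (∃ c ∈ P.cells, c.1 = x0) ∧ (∃ c ∈ P.cells, c.1 = x0 + w - 1) ∧
  (∃ c ∈ P.cells, c.2 = y0) ∧ (∃ c ∈ P.cells, c.2 = y0 + h - 1)

/-- Reachability in the dual graph of `P` avoiding the set `S` of cells. -/
def ReachAvoid (P : Polyomino) (S : Cell → Prop) : Cell → Cell → Prop :=
  Relation.ReflTransGen fun u v => (u, v) ∈ P.joins ∧ ¬ S u ∧ ¬ S v

/-- The cells of the polyomino `P_W`. -/
def pwCells : Finset Cell := {(1, 1), (2, 1), (3, 1), (3, 2), (4, 2), (4, 3), (4, 4)}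

/-- The eight signed-permutation symmetries of the lattice, composed with a translation. -/
def sym8 (s₁ s₂ sw : Bool) (t : Cell) (p : Cell) : Cell :=
  let q : Cell := if sw then (p.2, p.1) else p
  (t.1 + (if s₁ then -q.1 else q.1), t.2 + (if s₂ then -q.2 else q.2))

/-- `P` is congruent (up to rotation, reflection and translation) to the polyomino `P_W`. -/
def CongruentToPW (P : Polyomino) : Prop :=
  ∃ s₁ s₂ sw : Bool, ∃ t : Cell,
    P.cells.image (sym8 s₁ s₂ sw t) = pwCells ∧
    P.joins.image (fun e => (sym8 s₁ s₂ sw t e.1, sym8 s₁ s₂ sw t e.2)) = fullJoins pwCells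

/-!
A folding blueprint maps every cell isometrically into the cube surface, hence into a single
face: the centre of the cell is sent to a point of some face, and it is the image of the midpoint
of any two opposite points of the cell. Since every face is covered, `P` has at least six cells;
the bounding box allows at most six, so `P` has exactly six cells and distinct cells go to
distinct faces. Two joined cells send a common lattice corner to the same point, and a point lies
on at most three faces; hence each of the two `2 × 2` blocks covering the box carries at most two
joins. This leaves room for at most four joins, whereas a tree on six cells has five.
-/

theorem _root_.Isometry.map_midpoint_of_mem {E F : Type*}
    [NormedAddCommGroup E] [NormedSpace ℝ E] [NormedAddCommGroup F] [NormedSpace ℝ F]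
    [StrictConvexSpace ℝ F] {s : Set E} {g : s → F} (hg : Isometry g) {x y m : s}
    (hm : (m : E) = midpoint ℝ (x : E) y) : g m = midpoint ℝ (g x) (g y) := by
  have hx : dist (x : E) m = dist (x : E) y / 2 := by
    rw [hm, dist_left_midpoint]; norm_num; ring
  have hy : dist (m : E) y = dist (x : E) y / 2 := by
    rw [hm, dist_midpoint_right]; norm_num; ring
  apply eq_midpoint_of_dist_eq_half <;> simpa [hg.dist_eq, Subtype.dist_eq]

theorem eq_of_mem_cubeFace_of_mem_cubeFace {p : R3} {i : Fin 3} {b b' : Bool}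
    (h : p ∈ cubeFace i b) (h' : p ∈ cubeFace i b') : b = b' := by
  have := h.2.symm.trans h'.2
  cases b <;> cases b' <;> simp_all

theorem fst_ne_of_mem_cubeFace {p : R3} {f f' : Fin 3 × Bool} (h : p ∈ cubeFace f.1 f.2)
    (h' : p ∈ cubeFace f'.1 f'.2) (hne : f ≠ f') : f.1 ≠ f'.1 := by
  obtain ⟨i, b⟩ := f
  obtain ⟨i', b'⟩ := f'
  rintro rfl : i = i'
  exact hne (congrArg (Prod.mk i) (eq_of_mem_cubeFace_of_mem_cubeFace h h'))

theorem cubeFace_subset_cubeSurface (i : Fin 3) (b : Bool) : cubeFace i b ⊆ cubeSurface :=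
  fun _ hp => ⟨hp.1, i, by cases b <;> simp [hp.2]⟩

def faceCentre (i : Fin 3) (b : Bool) : R3 :=
  WithLp.toLp 2 fun j => if j = i then (if b then 1 else 0) else 1 / 2

theorem faceCentre_mem_cubeFace (i : Fin 3) (b : Bool) : faceCentre i b ∈ cubeFace i b := by
  refine ⟨fun j => ?_, by simp [faceCentre]⟩
  by_cases hj : j = i <;> cases b <;> norm_num [faceCentre, hj]

theorem eq_of_faceCentre_mem_cubeFace {i j : Fin 3} {b b' : Bool}
    (h : faceCentre i b ∈ cubeFace j b') : (j, b') = (i, b) := by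
  obtain rfl : j = i := by
    by_contra hji
    have := h.2
    cases b' <;> norm_num [faceCentre, hji] at this
  rw [eq_of_mem_cubeFace_of_mem_cubeFace h (faceCentre_mem_cubeFace j b)]

/-- The centre `o` of the square is the midpoint of `x` and the opposite point `x'`, so a
coordinate taking an extreme value `0` or `1` at `g o` takes it at `g x` as well. -/
theorem exists_cubeFace_of_isometry {g : unitSq → R3} (hg : Isometry g)
    (hC : ∀ x, g x ∈ cubeSurface) : ∃ i b, ∀ x, g x ∈ cubeFace i b := by
  let o : unitSq := ⟨mk2 (1 / 2) (1 / 2), by norm_num [unitSq, mk2]⟩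
  obtain ⟨i, hi⟩ := (hC o).2
  refine ⟨i, decide (g o i = 1), fun x => ⟨(hC x).1, ?_⟩⟩
  let x' : unitSq := ⟨mk2 (1 - x.1 0) (1 - x.1 1), by
    obtain ⟨h0, h1, h2, h3⟩ := x.2
    exact ⟨by simpa [mk2], by simpa [mk2], by simpa [mk2], by simpa [mk2]⟩⟩
  have hmid := hg.map_midpoint_of_mem (x := x) (y := x') (m := o) (by
    ext j; fin_cases j <;> simp [o, x', mk2, midpoint_eq_smul_add] <;> ring)
  have hcoord := congrArg (· i) hmid
  simp only [midpoint_eq_smul_add, PiLp.smul_apply, PiLp.add_apply, smul_eq_mul,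
    invOf_eq_inv] at hcoord
  have hx := (hC x).1 i
  have hx' := (hC x').1 i
  rcases hi with h | h <;> simp only [h] <;> norm_num <;> linarith

def MapsCellsToFaces (P : Polyomino) (β : PolySpace P → R3) (face : Cell → Fin 3 × Bool) :
    Prop :=
  ∀ c (hc : c ∈ P.cells) x (hx : x ∈ unitSq), β (pt P c hc x hx) ∈ cubeFace (face c).1 (face c).2

def corner (P : Polyomino) (c : Cell) (hc : c ∈ P.cells) (k : Fin 2 × Fin 2) : PolySpace P :=
  pt P c hc (mk2 (k.1 : ℕ) (k.2 : ℕ)) (by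
    have h (i : Fin 2) : ((i : ℕ) : ℝ) ≤ 1 := by exact_mod_cast Nat.le_of_lt_succ i.2
    exact ⟨by simp [mk2], by simpa [mk2] using h k.1, by simp [mk2], by simpa [mk2] using h k.2⟩)

theorem corner_eq_of_mem_joins {P : Polyomino} {c d : Cell} (hj : (c, d) ∈ P.joins)
    (hc : c ∈ P.cells) (hd : d ∈ P.cells) {k k' : Fin 2 × Fin 2}
    (h : cornerPt c k = cornerPt d k') : corner P c hc k = corner P d hd k' := by
  refine Quot.sound ⟨?_, Or.inr hj⟩
  simp only [cornerPt, Prod.ext_iff] at h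
  simp only [cellPt, mk2, PiLp.toLp_apply, Matrix.cons_val_zero, Matrix.cons_val_one]
  exact_mod_cast congrArg₂ (fun s t : ℤ => mk2 s t) h.1 h.2

def block (a b : ℤ) : Finset Cell := Finset.Icc (a, b) (a + 1, b + 1)

theorem mem_block {a b : ℤ} {c : Cell} :
    c ∈ block a b ↔ a ≤ c.1 ∧ c.1 ≤ a + 1 ∧ b ≤ c.2 ∧ c.2 ≤ b + 1 := by
  simp only [block, Finset.mem_Icc, Prod.le_def]
  tauto

def blockJoins (P : Polyomino) (a b : ℤ) : Finset (Cell × Cell) :=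
  P.joins.filter fun e => e.1 ∈ block a b ∧ e.2 ∈ block a b

section

variable {P : Polyomino} {β : PolySpace P → R3} {face : Cell → Fin 3 × Bool}

theorem exists_mapsCellsToFaces (hβ : IsBlueprint P β) (hC : Set.range β ⊆ cubeSurface) :
    ∃ face, MapsCellsToFaces P β face := by
  have : ∀ c, ∃ f : Fin 3 × Bool, ∀ (hc : c ∈ P.cells) x hx,
      β (pt P c hc x hx) ∈ cubeFace f.1 f.2 := by
    intro c
    by_cases hc : c ∈ P.cells
    · obtain ⟨i, b, h⟩ := exists_cubeFace_of_isometry (g := fun x : unitSq => β (pt P c hc x x.2))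
        (Isometry.of_dist_eq fun x y => hβ c hc x y x.2 y.2) fun _ => hC ⟨_, rfl⟩
      exact ⟨(i, b), fun _ x hx => h ⟨x, hx⟩⟩
    · exact ⟨(0, false), fun h => absurd h hc⟩
  choose face hface using this
  exact ⟨face, hface⟩

theorem surjOn_face (hF : MapsCellsToFaces P β face) (hC : cubeSurface ⊆ Set.range β) :
    Set.SurjOn face P.cells Set.univ := by
  rintro ⟨i, b⟩ -
  obtain ⟨z, hz⟩ := hC (cubeFace_subset_cubeSurface i b (faceCentre_mem_cubeFace i b))
  obtain ⟨⟨⟨c, hc⟩, ⟨x, hx⟩⟩, rfl⟩ := Quot.exists_rep z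
  exact ⟨c, hc, eq_of_faceCentre_mem_cubeFace (hz ▸ hF c hc x hx)⟩

theorem false_of_block_corners_eq (hF : MapsCellsToFaces P β face)
    (hinj : Set.InjOn face P.cells) {a b : ℤ} {h00 : (a, b) ∈ P.cells}
    {h10 : (a + 1, b) ∈ P.cells} {h01 : (a, b + 1) ∈ P.cells} {h11 : (a + 1, b + 1) ∈ P.cells}
    (e10 : corner P (a, b) h00 (1, 1) = corner P (a + 1, b) h10 (0, 1))
    (e01 : corner P (a, b) h00 (1, 1) = corner P (a, b + 1) h01 (1, 0))
    (e11 : corner P (a, b) h00 (1, 1) = corner P (a + 1, b + 1) h11 (0, 0)) : False := by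
  have hmem {c} (hc : c ∈ P.cells) {k} (e : corner P (a, b) h00 (1, 1) = corner P c hc k) :
      β (corner P (a, b) h00 (1, 1)) ∈ cubeFace (face c).1 (face c).2 :=
    e ▸ hF c hc _ _
  have hne {c d} (hc : c ∈ P.cells) (hd : d ∈ P.cells) {k l}
      (ec : corner P (a, b) h00 (1, 1) = corner P c hc k)
      (ed : corner P (a, b) h00 (1, 1) = corner P d hd l) (hcd : c ≠ d) :
      (face c).1 ≠ (face d).1 :=
    fst_ne_of_mem_cubeFace (hmem hc ec) (hmem hd ed) (hinj.ne hc hd hcd)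
  have := hne h00 h10 rfl e10 (by simp)
  have := hne h00 h01 rfl e01 (by simp)
  have := hne h00 h11 rfl e11 (by simp)
  have := hne h10 h01 e10 e01 (by simp)
  have := hne h10 h11 e10 e11 (by simp)
  have := hne h01 h11 e01 e11 (by simp)
  -- four pairwise distinct axes in `Fin 3`
  omega

/-- Three of the four joins between the cells of a block would connect all four cells, and so
identify their common corners. -/
theorem card_blockJoins_le (hF : MapsCellsToFaces P β face) (hinj : Set.InjOn face P.cells)
    (a b : ℤ) : (blockJoins P a b).card ≤ 4 := by
  have hjoin {c d} (k k') (hj : (c, d) ∈ P.joins) (h : cornerPt c k = cornerPt d k') :=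
    corner_eq_of_mem_joins hj (P.joins_mem _ hj).1 (P.joins_mem _ hj).2 h
  have eS (hj : ((a, b), (a + 1, b)) ∈ P.joins) := hjoin (1, 1) (0, 1) hj (by simp [cornerPt])
  have eN (hj : ((a, b + 1), (a + 1, b + 1)) ∈ P.joins) :=
    hjoin (1, 0) (0, 0) hj (by simp [cornerPt])
  have eW (hj : ((a, b), (a, b + 1)) ∈ P.joins) := hjoin (1, 1) (1, 0) hj (by simp [cornerPt])
  have eE (hj : ((a + 1, b), (a + 1, b + 1)) ∈ P.joins) :=
    hjoin (0, 1) (0, 0) hj (by simp [cornerPt])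
  have hSN (hS : ((a, b), (a + 1, b)) ∈ P.joins) (hN : ((a, b + 1), (a + 1, b + 1)) ∈ P.joins) :
      ((a, b), (a, b + 1)) ∉ P.joins ∧ ((a + 1, b), (a + 1, b + 1)) ∉ P.joins := by
    refine ⟨fun hW => ?_, fun hE => ?_⟩
    · exact false_of_block_corners_eq hF hinj (eS hS) (eW hW) ((eW hW).trans (eN hN))
    · exact false_of_block_corners_eq hF hinj (eS hS) (((eS hS).trans (eE hE)).trans (eN hN).symm)
        ((eS hS).trans (eE hE))
  have hWE (hW : ((a, b), (a, b + 1)) ∈ P.joins) (hE : ((a + 1, b), (a + 1, b + 1)) ∈ P.joins) :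
      ((a, b), (a + 1, b)) ∉ P.joins ∧ ((a, b + 1), (a + 1, b + 1)) ∉ P.joins := by
    refine ⟨fun hS => ?_, fun hN => ?_⟩
    · exact false_of_block_corners_eq hF hinj (eS hS) (eW hW) ((eS hS).trans (eE hE))
    · exact false_of_block_corners_eq hF hinj (((eW hW).trans (eN hN)).trans (eE hE).symm) (eW hW)
        ((eW hW).trans (eN hN))
  let T := ([((a, b), (a + 1, b)), ((a, b + 1), (a + 1, b + 1)), ((a, b), (a, b + 1)),
    ((a + 1, b), (a + 1, b + 1))].filter (· ∈ P.joins)).toFinset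
  have hT : T.card ≤ 2 := by
    refine (List.toFinset_card_le _).trans ?_
    simp only [List.filter_cons, List.filter_nil]
    split_ifs <;> simp_all
  have hsub : blockJoins P a b ⊆ T ∪ T.image Prod.swap := by
    rintro ⟨⟨c1, c2⟩, d1, d2⟩ he
    simp only [blockJoins, Finset.mem_filter, mem_block] at he
    have hadj := P.joins_adj _ he.1
    have hswap := P.joins_symm _ he.1
    simp only [cellAdj] at hadj hswap
    rw [Finset.mem_union, Finset.mem_image]
    by_cases hlow : c1 ≤ d1 ∧ c2 ≤ d2
    · left
      simp [T, he.1]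
      omega
    · right
      refine ⟨((d1, d2), (c1, c2)), ?_, rfl⟩
      simp [T, hswap]
      omega
  calc (blockJoins P a b).card ≤ (T ∪ T.image Prod.swap).card := Finset.card_le_card hsub
    _ ≤ T.card + T.card := (Finset.card_union_le _ _).trans (by grw [Finset.card_image_le])
    _ ≤ 4 := by omega

theorem card_cells_le_of_hasBoundingBox {x0 y0 : ℤ} {w h : ℕ}
    (hbb : HasBoundingBox P x0 y0 w h) : P.cells.card ≤ w * h := by
  have hsub : P.cells ⊆ Finset.Ico x0 (x0 + w) ×ˢ Finset.Ico y0 (y0 + h) := fun c hc => by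
    have := hbb.1 c hc
    simp only [Finset.mem_product, Finset.mem_Ico]
    omega
  simpa using Finset.card_le_card hsub

theorem joins_subset_blockJoins_union {x0 y0 : ℤ} {w h : ℕ} (hbb : HasBoundingBox P x0 y0 w h)
    (hsize : (h = 2 ∧ w ≤ 3) ∨ (w = 2 ∧ h ≤ 3)) :
    P.joins ⊆ blockJoins P x0 y0 ∪ blockJoins P (x0 + w - 2) (y0 + h - 2) := by
  rintro ⟨c, d⟩ he
  have hc := hbb.1 c (P.joins_mem _ he).1
  have hd := hbb.1 d (P.joins_mem _ he).2
  have hadj := P.joins_adj _ he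
  simp only [cellAdj] at hadj
  simp only [Finset.mem_union, blockJoins, Finset.mem_filter, mem_block, he, true_and]
  omega

end

/-- No tree-shaped polyomino of bounding size `2 × n` with `n ≤ 3` folds
onto the surface of the unit cube. -/
theorem treeShaped_2xn_small_not_foldable (P : Polyomino) (htree : TreeShaped P)
    (x0 y0 : ℤ) (w h : ℕ) (hbb : HasBoundingBox P x0 y0 w h)
    (hsize : (h = 2 ∧ w ≤ 3) ∨ (w = 2 ∧ h ≤ 3)) :
    ¬ FoldsOntoCube P := by
  rintro ⟨-, -, β, hβ, hrange, -⟩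
  obtain ⟨face, hF⟩ := exists_mapsCellsToFaces hβ hrange.subset
  have hsurj : Set.SurjOn face P.cells (Finset.univ : Finset (Fin 3 × Bool)) := by
    simpa using surjOn_face hF hrange.superset
  have hcard : P.cells.card = 6 := by
    have := card_cells_le_of_hasBoundingBox hbb
    have := Finset.card_le_card_of_surjOn face hsurj
    simp only [Finset.card_univ, Fintype.card_prod, Fintype.card_fin, Fintype.card_bool] at this
    rcases hsize with ⟨rfl, _⟩ | ⟨rfl, _⟩ <;> omega
  have hinj : Set.InjOn face P.cells :=
    Finset.injOn_of_surjOn_of_card_le face (fun _ _ => Finset.mem_coe.2 (Finset.mem_univ _))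
      hsurj (by simp [hcard])
  have hjoins : P.joins.card = 10 := by rw [htree, hcard]
  have := (Finset.card_le_card (joins_subset_blockJoins_union hbb hsize)).trans
    (Finset.card_union_le _ _)
  have := card_blockJoins_le hF hinj x0 y0
  have := card_blockJoins_le hF hinj (x0 + w - 2) (y0 + h - 2)
  omega

end CubeFold
end
end

section
/- The polyomino P_W does not fold onto the surface C of the unit cube. -/
/-!
Common formal framework: polyominoes (as square complexes with possible slits),
their topological realisations, folded states, ambient isotopy, foldings onto the
surface of the unit cube, unlinks, and consistent mappings.
-/

open Classical
noncomputable section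

namespace CubeFold

/-!
A blueprint is isometric on every cell, hence affine there, and a flat unit square inside the
surface of the unit cube must be one of its six faces, with its corners at vertices of the cube.
So a blueprint of a polyomino onto the cube is combinatorial: it is described by a frame (a
vertex and two edge directions) on every cell, and the frame of a cell joined to the right of or
above a given cell is determined by the frame of that cell up to the direction of the fold.
For `P_W` a finite check over all such chains of frames shows that some face is always missed.
-/

open Set
open scoped RealInnerProductSpace

section InnerProductSpace

variable {F E : Type*} [NormedAddCommGroup F] [InnerProductSpace ℝ F]
  [NormedAddCommGroup E] [InnerProductSpace ℝ E]

theorem inner_sub_sub_eq_of_dist_eq {s : Set F} {f : F → E}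
    (hf : ∀ x ∈ s, ∀ y ∈ s, dist (f x) (f y) = dist x y) {o x y : F}
    (ho : o ∈ s) (hx : x ∈ s) (hy : y ∈ s) :
    ⟪f x - f o, f y - f o⟫ = ⟪x - o, y - o⟫ := by
  simp only [real_inner_eq_norm_mul_self_add_norm_mul_self_sub_norm_sub_mul_self_div_two,
    sub_sub_sub_cancel_right, ← dist_eq_norm, hf _ hx _ ho, hf _ hy _ ho, hf _ hx _ hy]

theorem eq_smul_add_smul_of_inner_eq {t : Set F} {g : F → E}
    (hg : ∀ x ∈ t, ∀ y ∈ t, ⟪g x, g y⟫ = ⟪x, y⟫) {x y z : F} (hx : x ∈ t) (hy : y ∈ t)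
    (hz : z ∈ t) {a b : ℝ} (h : x = a • y + b • z) : g x = a • g y + b • g z := by
  have h0 : ⟪x - (a • y + b • z), x - (a • y + b • z)⟫ = 0 := by
    rw [h, sub_self, inner_zero_left]
  rw [← sub_eq_zero, ← inner_self_eq_zero (𝕜 := ℝ)]
  simp only [inner_sub_left, inner_sub_right, inner_add_left, inner_add_right,
    real_inner_smul_left, real_inner_smul_right] at h0 ⊢
  simp only [hg _ hx _ hx, hg _ hx _ hy, hg _ hx _ hz, hg _ hy _ hx, hg _ hy _ hy, hg _ hy _ hz,
    hg _ hz _ hx, hg _ hz _ hy, hg _ hz _ hz]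
  exact h0

theorem eq_add_smul_add_smul_of_dist_eq {s : Set R2} {f : R2 → E}
    (hf : ∀ x ∈ s, ∀ y ∈ s, dist (f x) (f y) = dist x y)
    (h₀ : 0 ∈ s) (h₁ : mk2 1 0 ∈ s) (h₂ : mk2 0 1 ∈ s) {x : R2} (hx : x ∈ s) :
    f x = f 0 + x 0 • (f (mk2 1 0) - f 0) + x 1 • (f (mk2 0 1) - f 0) := by
  have hx' : x = x 0 • mk2 1 0 + x 1 • mk2 0 1 := by
    ext i
    fin_cases i <;> simp [mk2]
  have hg : ∀ y ∈ s, ∀ z ∈ s, ⟪f y - f 0, f z - f 0⟫ = ⟪y, z⟫ := fun y hy z hz => by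
    simpa using inner_sub_sub_eq_of_dist_eq hf h₀ hy hz
  rw [add_assoc, ← eq_smul_add_smul_of_inner_eq hg hx h₁ h₂ hx', add_sub_cancel]

end InnerProductSpace

section EuclideanSpace

variable {ι : Type*}

theorem dist_sq_eq_sum_sq [Fintype ι] (x y : EuclideanSpace ℝ ι) :
    dist x y ^ 2 = ∑ i, (x i - y i) ^ 2 := by
  simp [EuclideanSpace.dist_sq_eq, Real.dist_eq, sq_abs]

theorem exists_const_coord_of_segment [Finite ι] {Q : ι → Prop} {a d : EuclideanSpace ℝ ι}
    (h : ∀ t ∈ Icc (0 : ℝ) 1, ∃ i, Q i ∧ ((a + t • d) i = 0 ∨ (a + t • d) i = 1)) :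
    ∃ i, Q i ∧ d i = 0 ∧ (a i = 0 ∨ a i = 1) := by
  have hsel : ∀ t : Icc (0 : ℝ) 1, ∃ p : ι × Bool,
      Q p.1 ∧ a p.1 + t * d p.1 = if p.2 then 1 else 0 := by
    intro t
    obtain ⟨i, hQ, h0 | h1⟩ := h t t.2
    · exact ⟨(i, false), hQ, h0⟩
    · exact ⟨(i, true), hQ, h1⟩
  choose g hg using hsel
  have := Icc.infinite (zero_lt_one' ℝ)
  obtain ⟨t, t', htt', hgt⟩ := Finite.exists_ne_map_eq_of_infinite g
  obtain ⟨hQ, ht⟩ := hg t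
  obtain ⟨-, ht'⟩ := hg t'
  rw [← hgt] at ht'
  have hd : d (g t).1 = 0 := by
    have : ((t : ℝ) - t') * d (g t).1 = 0 := by linear_combination ht - ht'
    exact (mul_eq_zero.mp this).resolve_left (sub_ne_zero.mpr (Subtype.coe_ne_coe.mpr htt'))
  refine ⟨(g t).1, hQ, hd, ?_⟩
  rw [hd, mul_zero, add_zero] at ht
  rw [ht]
  split_ifs <;> simp

end EuclideanSpace

theorem eq_zero_or_eq_one_of_sq_sub_eq_one {x y : ℝ} (hx : x ∈ Icc (0 : ℝ) 1)
    (hy : y ∈ Icc (0 : ℝ) 1) (h : (x - y) ^ 2 = 1) : x = 0 ∨ x = 1 := by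
  obtain ⟨hx₀, hx₁⟩ := hx
  obtain ⟨hy₀, hy₁⟩ := hy
  have : (x - y - 1) * (x - y + 1) = 0 := by linear_combination h
  rcases mul_eq_zero.mp this with h' | h'
  · exact Or.inr (by linarith)
  · exact Or.inl (by linarith)

theorem exists_mapsTo_cubeFace {f : R2 → R3}
    (hf : ∀ x ∈ unitSq, ∀ y ∈ unitSq, dist (f x) (f y) = dist x y)
    (hmaps : MapsTo f unitSq cubeSurface) : ∃ i b, MapsTo f unitSq (cubeFace i b) := by
  have mem : ∀ {s t : ℝ}, s ∈ Icc (0 : ℝ) 1 → t ∈ Icc (0 : ℝ) 1 → mk2 s t ∈ unitSq :=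
    fun hs ht => ⟨hs.1, hs.2, ht.1, ht.2⟩
  have h₀ : (0 : R2) ∈ unitSq := by simp [unitSq]
  set u := f (mk2 1 0) - f 0
  set v := f (mk2 0 1) - f 0
  have haff : ∀ x ∈ unitSq, f x = f 0 + x 0 • u + x 1 • v := fun x hx =>
    eq_add_smul_add_smul_of_dist_eq hf h₀ (mem (by simp) (by simp)) (mem (by simp) (by simp)) hx
  have hline : ∀ s ∈ Icc (0 : ℝ) 1, ∀ t ∈ Icc (0 : ℝ) 1,
      ∃ i, True ∧ ((f 0 + s • u + t • v) i = 0 ∨ (f 0 + s • u + t • v) i = 1) := by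
    intro s hs t ht
    obtain ⟨-, i, hi⟩ := hmaps (mem hs ht)
    rw [haff _ (mem hs ht)] at hi
    exact ⟨i, trivial, by simpa [mk2] using hi⟩
  -- a coordinate constant along `v` on every segment parallel to `v`, then also along `u`
  obtain ⟨i, hv, hu, h0⟩ := exists_const_coord_of_segment (Q := fun i => v i = 0) fun s hs => by
    obtain ⟨i, -, hvi, hi⟩ := exists_const_coord_of_segment (hline s hs)
    exact ⟨i, hvi, hi⟩
  refine ⟨i, decide (f 0 i = 1), fun x hx => ⟨(hmaps hx).1, ?_⟩⟩
  rw [haff x hx]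
  rcases h0 with h | h <;> simp [hu, hv, h]

def unitSqCorner (k : Fin 2 × Fin 2) : R2 := mk2 (k.1 : ℕ) (k.2 : ℕ)

def boolVec (w : Fin 3 → Bool) : R3 := WithLp.toLp 2 fun i => if w i then 1 else 0

theorem unitSqCorner_mem (k : Fin 2 × Fin 2) : unitSqCorner k ∈ unitSq := by
  obtain ⟨k₁, k₂⟩ := k
  fin_cases k₁ <;> fin_cases k₂ <;> norm_num [unitSqCorner, unitSq, mk2]

theorem dist_unitSqCorner_sq (k k' : Fin 2 × Fin 2) :
    dist (unitSqCorner k) (unitSqCorner k') ^ 2 = kdiff k k' := by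
  rw [dist_sq_eq_sum_sq, Fin.sum_univ_two]
  obtain ⟨k₁, k₂⟩ := k
  obtain ⟨k₁', k₂'⟩ := k'
  fin_cases k₁ <;> fin_cases k₂ <;> fin_cases k₁' <;> fin_cases k₂' <;>
    norm_num [unitSqCorner, mk2, kdiff]

theorem dist_boolVec_sq (w w' : Fin 3 → Bool) :
    dist (boolVec w) (boolVec w') ^ 2 = vdiff w w' := by
  rw [dist_sq_eq_sum_sq, vdiff, Finset.card_filter]
  push_cast
  refine Finset.sum_congr rfl fun i _ => ?_
  cases hw : w i <;> cases hw' : w' i <;> norm_num [boolVec, hw, hw']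

theorem boolVec_injective : Function.Injective boolVec := fun w w' h => funext fun i => by
  have := congrArg (· i) h
  cases hw : w i <;> cases hw' : w' i <;> first | rfl | simp [boolVec, hw, hw'] at this

theorem exists_boolVec_eq_of_mapsTo_cubeFace {f : R2 → R3}
    (hf : ∀ x ∈ unitSq, ∀ y ∈ unitSq, dist (f x) (f y) = dist x y) {i : Fin 3} {b : Bool}
    (hface : MapsTo f unitSq (cubeFace i b)) (k : Fin 2 × Fin 2) :
    ∃ w, f (unitSqCorner k) = boolVec w := by
  set p := f (unitSqCorner k)
  set q := f (unitSqCorner (k.1 + 1, k.2 + 1))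
  obtain ⟨hp, hpi⟩ := hface (unitSqCorner_mem k)
  obtain ⟨hq, hqi⟩ := hface (unitSqCorner_mem (k.1 + 1, k.2 + 1))
  -- a diagonal of length `√2` in a face joins two opposite vertices of that face
  have hdiag : ∑ j, (p j - q j) ^ 2 = 2 := by
    rw [← dist_sq_eq_sum_sq, hf _ (unitSqCorner_mem _) _ (unitSqCorner_mem _),
      dist_unitSqCorner_sq]
    obtain ⟨k₁, k₂⟩ := k
    fin_cases k₁ <;> fin_cases k₂ <;> norm_num [kdiff]
  have hle : ∀ j, (p j - q j) ^ 2 ≤ if j = i then 0 else 1 := fun j => by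
    split_ifs with hj
    · subst hj
      rw [hpi, hqi, sub_self]
      norm_num
    · nlinarith [hp j, hq j]
  have hsum : ∑ j, (if j = i then (0 : ℝ) else 1) = 2 := by
    simp [Finset.sum_ite, Finset.filter_ne']
  have hsq := (Finset.sum_eq_sum_iff_of_le fun j _ => hle j).1 (hdiag.trans hsum.symm)
  have h01 : ∀ j, p j = 0 ∨ p j = 1 := by
    intro j
    by_cases hj : j = i
    · subst hj
      rw [hpi]
      split_ifs <;> simp
    · exact eq_zero_or_eq_one_of_sq_sub_eq_one (hp j) (hq j) (by simpa [hj] using hsq j)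
  refine ⟨fun j => decide (p j = 1), ?_⟩
  ext j
  rcases h01 j with h | h <;> simp [boolVec, h]

def flipCoord (j : Fin 3) (v : Fin 3 → Bool) : Fin 3 → Bool :=
  fun i => if i = j then !v i else v i

/-- A unit square on the surface of the cube, given by a vertex `s.1` and the directions `s.2.1`,
`s.2.2` of its two edges at that vertex; these correspond to the directions `(1, 0)` and `(0, 1)`
of the plane. -/
abbrev CubeFrame := (Fin 3 → Bool) × Fin 3 × Fin 3

namespace CubeFrame

def corner (s : CubeFrame) (k : Fin 2 × Fin 2) : Fin 3 → Bool :=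
  (if k.1 = 1 then flipCoord s.2.1 else id) ((if k.2 = 1 then flipCoord s.2.2 else id) s.1)

def normal (s : CubeFrame) : Fin 3 :=
  if s.2.1 ≠ 0 ∧ s.2.2 ≠ 0 then 0 else if s.2.1 ≠ 1 ∧ s.2.2 ≠ 1 then 1 else 2

def face (s : CubeFrame) : Fin 3 × Bool := (s.normal, s.1 s.normal)

/-- The frames `s'` that a cell glued to the right of a cell with frame `s` can carry; the new
first direction is free, it records how the common edge is folded. -/
abbrev IsRightStep (s s' : CubeFrame) : Prop := s'.1 = flipCoord s.2.1 s.1 ∧ s'.2.2 = s.2.2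

abbrev IsUpStep (s s' : CubeFrame) : Prop := s'.1 = flipCoord s.2.2 s.1 ∧ s'.2.1 = s.2.1

theorem exists_flipCoord_of_vdiff_eq_one :
    ∀ u v, vdiff u v = 1 → ∃ j, v = flipCoord j u := by decide

theorem ne_of_vdiff_flipCoord_eq_two : ∀ (a : Fin 3 → Bool) (j₁ j₂ : Fin 3),
    vdiff (flipCoord j₁ a) (flipCoord j₂ a) = 2 → j₁ ≠ j₂ := by decide

set_option synthInstance.maxSize 2000 in
theorem eq_flipCoord_flipCoord_of_vdiff :
    ∀ (a : Fin 3 → Bool) (j₁ j₂ : Fin 3) (z : Fin 3 → Bool), j₁ ≠ j₂ →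
      vdiff (flipCoord j₁ a) z = 1 → vdiff (flipCoord j₂ a) z = 1 → vdiff a z = 2 →
      z = flipCoord j₁ (flipCoord j₂ a) := by decide

theorem exists_eq_corner (w : Fin 2 × Fin 2 → Fin 3 → Bool)
    (h : ∀ k k', vdiff (w k) (w k') = kdiff k k') :
    ∃ s : CubeFrame, s.2.1 ≠ s.2.2 ∧ w = s.corner := by
  obtain ⟨j₁, h₁⟩ := exists_flipCoord_of_vdiff_eq_one _ _ (h (0, 0) (1, 0))
  obtain ⟨j₂, h₂⟩ := exists_flipCoord_of_vdiff_eq_one _ _ (h (0, 0) (0, 1))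
  have hne : j₁ ≠ j₂ := ne_of_vdiff_flipCoord_eq_two _ _ _ (h₁ ▸ h₂ ▸ h (1, 0) (0, 1))
  have h₁₁ := eq_flipCoord_flipCoord_of_vdiff _ _ _ _ hne (h₁ ▸ h (1, 0) (1, 1))
    (h₂ ▸ h (0, 1) (1, 1)) (h (0, 0) (1, 1))
  refine ⟨(w (0, 0), j₁, j₂), hne, funext fun k => ?_⟩
  obtain ⟨k₁, k₂⟩ := k
  fin_cases k₁ <;> fin_cases k₂ <;> simp [corner] <;> assumption

theorem face_eq_of_corner_apply_eq : ∀ s : CubeFrame, s.2.1 ≠ s.2.2 →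
    ∀ i b, (∀ k, s.corner k i = b) → s.face = (i, b) := by decide

set_option maxRecDepth 100000 in
theorem isRightStep_of_corner_eq : ∀ s s' : CubeFrame,
    s.corner (1, 0) = s'.corner (0, 0) → s.corner (1, 1) = s'.corner (0, 1) →
    IsRightStep s s' := by decide

set_option maxRecDepth 100000 in
theorem isUpStep_of_corner_eq : ∀ s s' : CubeFrame,
    s.corner (0, 1) = s'.corner (0, 0) → s.corner (1, 1) = s'.corner (1, 0) →
    IsUpStep s s' := by decide

-- Each hypothesis follows the quantifier it constrains, so that `decide` prunes early.
set_option maxRecDepth 100000 in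
set_option synthInstance.maxSize 2000 in
theorem exists_face_ne_of_pw_chain :
    ∀ (a : Fin 3 → Bool) (j₁ j₂ : Fin 3), j₁ ≠ j₂ → ∀ n₁ : Fin 3, n₁ ≠ j₂ →
    ∀ n₂ : Fin 3, n₂ ≠ j₂ → ∀ n₃ : Fin 3, n₂ ≠ n₃ → ∀ n₄ : Fin 3, n₄ ≠ n₃ →
    ∀ n₅ : Fin 3, n₄ ≠ n₅ → ∀ n₆ : Fin 3, n₄ ≠ n₆ →
    ∃ f, face (a, j₁, j₂) ≠ f ∧ face (flipCoord j₁ a, n₁, j₂) ≠ f ∧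
      face (flipCoord n₁ (flipCoord j₁ a), n₂, j₂) ≠ f ∧
      face (flipCoord j₂ (flipCoord n₁ (flipCoord j₁ a)), n₂, n₃) ≠ f ∧
      face (flipCoord n₂ (flipCoord j₂ (flipCoord n₁ (flipCoord j₁ a))), n₄, n₃) ≠ f ∧
      face (flipCoord n₃ (flipCoord n₂ (flipCoord j₂ (flipCoord n₁ (flipCoord j₁ a)))),
        n₄, n₅) ≠ f ∧
      face (flipCoord n₅ (flipCoord n₃ (flipCoord n₂ (flipCoord j₂ (flipCoord n₁
        (flipCoord j₁ a))))), n₄, n₆) ≠ f := by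
  decide

theorem exists_face_ne_of_pw (S : Cell → CubeFrame) (hv : ∀ c ∈ pwCells, (S c).2.1 ≠ (S c).2.2)
    (h₁ : (S (1, 1)).IsRightStep (S (2, 1))) (h₂ : (S (2, 1)).IsRightStep (S (3, 1)))
    (h₃ : (S (3, 1)).IsUpStep (S (3, 2))) (h₄ : (S (3, 2)).IsRightStep (S (4, 2)))
    (h₅ : (S (4, 2)).IsUpStep (S (4, 3))) (h₆ : (S (4, 3)).IsUpStep (S (4, 4))) :
    ∃ f, ∀ c ∈ pwCells, (S c).face ≠ f := by
  simp only [pwCells, Finset.mem_insert, Finset.mem_singleton, forall_eq_or_imp, forall_eq]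
    at hv ⊢
  obtain ⟨v₁, v₂, v₃, v₄, v₅, v₆, v₇⟩ := hv
  generalize S (1, 1) = s₁ at *
  generalize S (2, 1) = s₂ at *
  generalize S (3, 1) = s₃ at *
  generalize S (3, 2) = s₄ at *
  generalize S (4, 2) = s₅ at *
  generalize S (4, 3) = s₆ at *
  generalize S (4, 4) = s₇ at *
  obtain ⟨a₁, j₁, j₂⟩ := s₁
  obtain ⟨a₂, n₁, m₂⟩ := s₂
  obtain ⟨a₃, n₂, m₃⟩ := s₃
  obtain ⟨a₄, m₄, n₃⟩ := s₄
  obtain ⟨a₅, n₄, m₅⟩ := s₅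
  obtain ⟨a₆, m₆, n₅⟩ := s₆
  obtain ⟨a₇, m₇, n₆⟩ := s₇
  simp only [IsRightStep, IsUpStep] at h₁ h₂ h₃ h₄ h₅ h₆
  obtain ⟨_, _⟩ := h₁
  obtain ⟨_, _⟩ := h₂
  obtain ⟨_, _⟩ := h₃
  obtain ⟨_, _⟩ := h₄
  obtain ⟨_, _⟩ := h₅
  obtain ⟨_, _⟩ := h₆
  subst a₂ a₃ a₄ a₅ a₆ a₇ m₂ m₃ m₄ m₅ m₆ m₇
  exact exists_face_ne_of_pw_chain a₁ j₁ j₂ v₁ n₁ v₂ n₂ v₃ n₃ v₄ n₄ v₅ n₅ v₆ n₆ v₇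

end CubeFrame

def IsCubeFrame (f : R2 → R3) (s : CubeFrame) : Prop :=
  s.2.1 ≠ s.2.2 ∧ (∀ k, f (unitSqCorner k) = boolVec (s.corner k)) ∧
    MapsTo f unitSq (cubeFace s.face.1 s.face.2)

theorem exists_isCubeFrame {f : R2 → R3}
    (hf : ∀ x ∈ unitSq, ∀ y ∈ unitSq, dist (f x) (f y) = dist x y)
    (hmaps : MapsTo f unitSq cubeSurface) : ∃ s, IsCubeFrame f s := by
  obtain ⟨i, b, hface⟩ := exists_mapsTo_cubeFace hf hmaps
  choose w hw using exists_boolVec_eq_of_mapsTo_cubeFace hf hface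
  have hdiff : ∀ k k', vdiff (w k) (w k') = kdiff k k' := fun k k' => by
    have := dist_unitSqCorner_sq k k'
    rw [← hf _ (unitSqCorner_mem k) _ (unitSqCorner_mem k'), hw, hw, dist_boolVec_sq] at this
    exact_mod_cast this
  obtain ⟨s, hs, rfl⟩ := CubeFrame.exists_eq_corner w hdiff
  have hface' : s.face = (i, b) := CubeFrame.face_eq_of_corner_apply_eq s hs i b fun k => by
    have := (hface (unitSqCorner_mem k)).2
    rw [hw k] at this
    cases hb : b <;> cases hk : s.corner k i <;> simp_all [boolVec]
  exact ⟨s, hs, hw, hface' ▸ hface⟩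

/-- A point of the face `(i, b)` of the cube that lies on no other face. -/
def faceCenter (i : Fin 3) (b : Bool) : R3 :=
  WithLp.toLp 2 fun j => if j = i then (if b then 1 else 0) else 1 / 2

theorem faceCenter_mem_cubeSurface (i : Fin 3) (b : Bool) : faceCenter i b ∈ cubeSurface :=
  ⟨fun j => by simp only [faceCenter, PiLp.toLp_apply]; split_ifs <;> norm_num,
    i, by cases b <;> simp [faceCenter]⟩

theorem eq_of_faceCenter_mem_cubeFace {i i' : Fin 3} {b b' : Bool}
    (h : faceCenter i b ∈ cubeFace i' b') : (i', b') = (i, b) := by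
  have h' := h.2
  by_cases hi : i' = i
  · subst hi
    cases b <;> cases b' <;> simp_all [faceCenter]
  · simp only [faceCenter, PiLp.toLp_apply, hi, if_false] at h'
    split_ifs at h' <;> norm_num at h'

def onCell (P : Polyomino) (β : PolySpace P → R3) (c : Cell) (x : R2) : R3 :=
  if h : c ∈ P.cells ∧ x ∈ unitSq then β (pt P c h.1 x h.2) else 0

section Polyomino

variable {P : Polyomino} {β : PolySpace P → R3}

theorem onCell_eq {c : Cell} {x : R2} (hc : c ∈ P.cells) (hx : x ∈ unitSq) :
    onCell P β c x = β (pt P c hc x hx) :=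
  dif_pos ⟨hc, hx⟩

theorem IsBlueprint.dist_onCell (hβ : IsBlueprint P β) {c : Cell} (hc : c ∈ P.cells) :
    ∀ x ∈ unitSq, ∀ y ∈ unitSq, dist (onCell P β c x) (onCell P β c y) = dist x y :=
  fun x hx y hy => by rw [onCell_eq hc hx, onCell_eq hc hy]; exact hβ c hc x y hx hy

theorem mapsTo_onCell (hβ : range β ⊆ cubeSurface) {c : Cell} (hc : c ∈ P.cells) :
    MapsTo (onCell P β c) unitSq cubeSurface :=
  fun _ hx => onCell_eq hc hx ▸ hβ (mem_range_self _)

theorem exists_onCell_eq_of_mem_range {p : R3} (hp : p ∈ range β) :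
    ∃ c ∈ P.cells, ∃ x ∈ unitSq, onCell P β c x = p := by
  obtain ⟨q, rfl⟩ := hp
  obtain ⟨⟨⟨c, hc⟩, ⟨x, hx⟩⟩, rfl⟩ := Quot.exists_rep q
  exact ⟨c, hc, x, hx, onCell_eq hc hx⟩

theorem onCell_unitSqCorner_eq_of_join {c d : Cell} {k k' : Fin 2 × Fin 2}
    (hcd : (c, d) ∈ P.joins) (h : cornerPt c k = cornerPt d k') :
    onCell P β c (unitSqCorner k) = onCell P β d (unitSqCorner k') := by
  obtain ⟨hc, hd⟩ := P.joins_mem _ hcd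
  rw [onCell_eq hc (unitSqCorner_mem k), onCell_eq hd (unitSqCorner_mem k')]
  refine congrArg β (Quot.sound ⟨?_, Or.inr hcd⟩)
  have := congrArg (fun p : ℤ × ℤ => mk2 p.1 p.2) h
  simpa [cornerPt, cellPt, unitSqCorner, mk2] using this

variable {S : Cell → CubeFrame}

theorem corner_eq_of_join (hS : ∀ c ∈ P.cells, IsCubeFrame (onCell P β c) (S c))
    {c d : Cell} {k k' : Fin 2 × Fin 2} (hcd : (c, d) ∈ P.joins)
    (h : cornerPt c k = cornerPt d k') : (S c).corner k = (S d).corner k' := by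
  obtain ⟨hc, hd⟩ := P.joins_mem _ hcd
  apply boolVec_injective
  rw [← (hS c hc).2.1, ← (hS d hd).2.1]
  exact onCell_unitSqCorner_eq_of_join hcd h

theorem isRightStep_of_join (hS : ∀ c ∈ P.cells, IsCubeFrame (onCell P β c) (S c))
    {c d : Cell} (hcd : (c, d) ∈ P.joins) (hd : d = (c.1 + 1, c.2)) :
    (S c).IsRightStep (S d) := by
  subst hd
  exact CubeFrame.isRightStep_of_corner_eq _ _ (corner_eq_of_join hS hcd (by simp [cornerPt]))
    (corner_eq_of_join hS hcd (by simp [cornerPt]))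

theorem isUpStep_of_join (hS : ∀ c ∈ P.cells, IsCubeFrame (onCell P β c) (S c))
    {c d : Cell} (hcd : (c, d) ∈ P.joins) (hd : d = (c.1, c.2 + 1)) :
    (S c).IsUpStep (S d) := by
  subst hd
  exact CubeFrame.isUpStep_of_corner_eq _ _ (corner_eq_of_join hS hcd (by simp [cornerPt]))
    (corner_eq_of_join hS hcd (by simp [cornerPt]))

theorem exists_face_eq (hS : ∀ c ∈ P.cells, IsCubeFrame (onCell P β c) (S c))
    (hβ : cubeSurface ⊆ range β) (f : Fin 3 × Bool) : ∃ c ∈ P.cells, (S c).face = f := by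
  obtain ⟨c, hc, x, hx, hcx⟩ :=
    exists_onCell_eq_of_mem_range (hβ (faceCenter_mem_cubeSurface f.1 f.2))
  exact ⟨c, hc, eq_of_faceCenter_mem_cubeFace (hcx ▸ (hS c hc).2.2 hx)⟩

end Polyomino

/-- The polyomino `P_W` does not fold onto the surface of the unit cube. -/
theorem pw_not_foldable (P : Polyomino)
    (hc : P.cells = pwCells) (hj : P.joins = fullJoins pwCells) :
    ¬ FoldsOntoCube P := by
  rintro ⟨-, -, β, hβ, hrange, -⟩
  choose! S hS using fun c (hc : c ∈ P.cells) =>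
    exists_isCubeFrame (hβ.dist_onCell hc) (mapsTo_onCell hrange.subset hc)
  have hjoin : ∀ {c d : Cell}, (c, d) ∈ fullJoins pwCells → (c, d) ∈ P.joins := fun h => hj ▸ h
  obtain ⟨f, hf⟩ := CubeFrame.exists_face_ne_of_pw S (fun c h => (hS c (hc ▸ h)).1)
    (isRightStep_of_join hS (hjoin (by decide)) rfl)
    (isRightStep_of_join hS (hjoin (by decide)) rfl)
    (isUpStep_of_join hS (hjoin (by decide)) rfl)
    (isRightStep_of_join hS (hjoin (by decide)) rfl)
    (isUpStep_of_join hS (hjoin (by decide)) rfl)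
    (isUpStep_of_join hS (hjoin (by decide)) rfl)
  obtain ⟨c, hcP, hcf⟩ := exists_face_eq hS hrange.superset f
  exact hf c (hc ▸ hcP) hcf

end CubeFold
end
end
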